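/- Let (E,ρ) be a metric space with a Borel measure m such that diam(E) ≤ 1, m(E) < ∞, and there exist constants c₁, c₂ > 0 and d_f ≥ 1 with c₁ r^{d_f} ≤ m(B(x,r)) ≤ c₂ r^{d_f} for all x ∈ E and r ∈ (0,1], where B(x,r) is the open ball of center x and radius r. Let p_t(x,y) be a symmetric sub-Markovian heat kernel on (E,m) and suppose there exist constants c₃, c₄ > 0 and d_w ≥ 2 such that p_t(x,y) ≤ c₃ t^{−d_f/d_w} exp(−c₄ (ρ(x,y)^{d_w}/t)^{1/(d_w−1)}) for all x,y ∈ E and t ∈ (0,1] (sub-Gaussian upper estimate). If p ∈ [1,∞) and δ ∈ (0,1] satisfy p·d_w·δ < d_f − p(d_f − d_w), then m belongs to the L^p-Kato class with order δ, i.e. there exist C, α₀ > 0 such that sup_{x∈E} (∫_E r_α(x,y)^p m(dy))^{1/p} ≤ C α^{−δ} for all α ≥ α₀. -/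

import Mathlib

/-!
The sub-Gaussian estimate gives `p_t ≤ c₃ t^{-d_f/d_w}` for `t ≤ 1`, and Chapman–Kolmogorov with
the sub-Markov property propagates the bound `c₃` at time `1` to all later times, so
`p_t ≤ c₃ (t ∧ 1)^{-d_f/d_w}`. Interpolating with `∫ p_t(x, y) m(dy) ≤ 1` gives
`‖p_t(x, ·)‖_p ≤ c₃^{1-1/p} (t ∧ 1)^{-θ}` with `θ = (1 - 1/p) d_f/d_w`. Minkowski's integral
inequality (a weighted Hölder inequality followed by Tonelli) then bounds `‖r_α(x, ·)‖_p` by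
`c₃^{1-1/p} ∫ e^{-αt} (t ∧ 1)^{-θ} dt ≤ C α^{θ-1}`, and the hypothesis on `δ` says `θ - 1 ≤ -δ`.
-/

open MeasureTheory ENNReal Set Filter

/-- The α-order resolvent kernel of a heat kernel `P`. -/
noncomputable def heatResolvent {E : Type*} [MeasurableSpace E]
    (P : ℝ → E → E → ℝ≥0∞) (α : ℝ) (x y : E) : ℝ≥0∞ :=
  ∫⁻ t in Set.Ioi (0:ℝ), ENNReal.ofReal (Real.exp (-(α * t))) * P t x y

theorem lintegral_rpow_le_lintegral_mul_lintegral_weighted {α : Type*} [MeasurableSpace α]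
    {μ : Measure α} {f w : α → ℝ≥0∞} (hf : AEMeasurable f μ) (hw : AEMeasurable w μ)
    (hw0 : ∀ᵐ a ∂μ, w a ≠ 0) (hwtop : ∀ᵐ a ∂μ, w a ≠ ⊤) {p : ℝ} (hp : 1 ≤ p) :
    (∫⁻ a, f a ∂μ) ^ p ≤ (∫⁻ a, w a ∂μ) ^ (p - 1) * ∫⁻ a, w a ^ (1 - p) * f a ^ p ∂μ := by
  have hp0 : 0 < p := by linarith
  have hsplit : ∀ᵐ a ∂μ, w a ^ ((p - 1) / p) * (w a ^ (1 - p) * f a ^ p) ^ (1 / p) = f a := by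
    filter_upwards [hw0, hwtop] with a ha0 hatop
    have hexp : (p - 1) / p + (1 - p) * (1 / p) = 0 := by field_simp; ring
    rw [ENNReal.mul_rpow_of_nonneg _ _ (by positivity), ← ENNReal.rpow_mul, ← ENNReal.rpow_mul,
      mul_one_div_cancel hp0.ne', ENNReal.rpow_one, ← mul_assoc,
      ← ENNReal.rpow_add _ _ ha0 hatop, hexp, ENNReal.rpow_zero, one_mul]
  have hHolder := ENNReal.lintegral_mul_norm_pow_le hw ((hw.pow_const (1 - p)).mul
    (hf.pow_const p)) (p := (p - 1) / p) (q := 1 / p) (div_nonneg (by linarith) hp0.le)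
    (by positivity) (by rw [← add_div, sub_add_cancel, div_self hp0.ne'])
  simp only [Pi.mul_apply] at hHolder
  rw [lintegral_congr_ae hsplit] at hHolder
  calc (∫⁻ a, f a ∂μ) ^ p
      ≤ ((∫⁻ a, w a ∂μ) ^ ((p - 1) / p) * (∫⁻ a, w a ^ (1 - p) * f a ^ p ∂μ) ^ (1 / p)) ^ p :=
        ENNReal.rpow_le_rpow hHolder hp0.le
    _ = _ := by
      rw [ENNReal.mul_rpow_of_nonneg _ _ hp0.le, ← ENNReal.rpow_mul, ← ENNReal.rpow_mul,
        div_mul_cancel₀ _ hp0.ne', one_div_mul_cancel hp0.ne', ENNReal.rpow_one]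

theorem lintegral_rpow_lintegral_le {T E : Type*} [MeasurableSpace T] [MeasurableSpace E]
    {ν : Measure T} {m : Measure E} [SFinite ν] [SFinite m] {F : T → E → ℝ≥0∞}
    (hF : Measurable (Function.uncurry F)) {h : T → ℝ≥0∞} (hh : Measurable h)
    (h0 : ∀ᵐ t ∂ν, h t ≠ 0) (htop : ∀ᵐ t ∂ν, h t ≠ ⊤) {p : ℝ} (hp : 1 ≤ p)
    (hFh : ∀ᵐ t ∂ν, ∫⁻ y, F t y ^ p ∂m ≤ h t ^ p) :
    ∫⁻ y, (∫⁻ t, F t y ∂ν) ^ p ∂m ≤ (∫⁻ t, h t ∂ν) ^ p := by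
  have hFp : Measurable (Function.uncurry fun y t => h t ^ (1 - p) * F t y ^ p) :=
    (hh.comp measurable_snd).pow_const _ |>.mul ((hF.comp measurable_swap).pow_const _)
  calc ∫⁻ y, (∫⁻ t, F t y ∂ν) ^ p ∂m
      ≤ ∫⁻ y, (∫⁻ t, h t ∂ν) ^ (p - 1) * ∫⁻ t, h t ^ (1 - p) * F t y ^ p ∂ν ∂m :=
        lintegral_mono fun y => lintegral_rpow_le_lintegral_mul_lintegral_weighted
          (hF.comp measurable_prodMk_right).aemeasurable hh.aemeasurable h0 htop hp
    _ = (∫⁻ t, h t ∂ν) ^ (p - 1) * ∫⁻ t, h t ^ (1 - p) * ∫⁻ y, F t y ^ p ∂m ∂ν := by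
        rw [lintegral_const_mul _ (by exact hFp.lintegral_prod_right'),
          lintegral_lintegral_swap hFp.aemeasurable]
        congr 1
        exact lintegral_congr fun t =>
          lintegral_const_mul _ ((hF.comp measurable_prodMk_left).pow_const _)
    _ ≤ (∫⁻ t, h t ∂ν) ^ (p - 1) * ∫⁻ t, h t ∂ν := by
        gcongr 1
        refine lintegral_mono_ae ?_
        filter_upwards [h0, htop, hFh] with t ht0 httop htF
        calc h t ^ (1 - p) * ∫⁻ y, F t y ^ p ∂m ≤ h t ^ (1 - p) * h t ^ p := by gcongr
          _ = h t := by rw [← ENNReal.rpow_add _ _ ht0 httop, sub_add_cancel, ENNReal.rpow_one]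
    _ = (∫⁻ t, h t ∂ν) ^ p := by
        conv_rhs => rw [← sub_add_cancel p 1]
        rw [ENNReal.rpow_add_of_nonneg _ _ (by linarith) zero_le_one, ENNReal.rpow_one]

theorem lintegral_rpow_le_of_le {α : Type*} [MeasurableSpace α] {μ : Measure α}
    {f : α → ℝ≥0∞} {M : ℝ≥0∞} (hM : M ≠ ⊤) (hfM : ∀ a, f a ≤ M) {p : ℝ} (hp : 1 ≤ p) :
    ∫⁻ a, f a ^ p ∂μ ≤ M ^ (p - 1) * ∫⁻ a, f a ∂μ := by
  rw [← lintegral_const_mul' _ _ (ENNReal.rpow_ne_top_of_nonneg (by linarith) hM)]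
  refine lintegral_mono fun a => ?_
  calc f a ^ p = f a ^ (p - 1) * f a := by
        conv_lhs => rw [← sub_add_cancel p 1]
        rw [ENNReal.rpow_add_of_nonneg _ _ (by linarith) zero_le_one, ENNReal.rpow_one]
    _ ≤ M ^ (p - 1) * f a := mul_le_mul_left (ENNReal.rpow_le_rpow (hfM a) (by linarith)) _

theorem lintegral_Ioi_exp_neg_mul_mul_rpow {s α : ℝ} (hs : -1 < s) (hα : 0 < α) :
    ∫⁻ t in Ioi (0:ℝ), ENNReal.ofReal (Real.exp (-(α * t)) * t ^ s)
      = ENNReal.ofReal (Real.Gamma (s + 1) * α ^ (-(s + 1))) := by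
  have hint := integral_rpow_mul_exp_neg_mul_rpow one_pos hs hα
  have hintegrable := integrableOn_rpow_mul_exp_neg_mul_rpow hs one_pos hα
  simp only [Real.rpow_one, neg_mul, div_one, mul_one] at hint hintegrable
  rw [← ofReal_integral_eq_lintegral_ofReal]
  · simp only [mul_comm (Real.exp _), hint, mul_comm (Real.Gamma _)]
  · exact hintegrable.congr_fun (fun t _ => mul_comm _ _) measurableSet_Ioi
  · filter_upwards [ae_restrict_mem measurableSet_Ioi] with t ht
    exact mul_nonneg (Real.exp_pos _).le (Real.rpow_nonneg ht.le _)

theorem lintegral_Ioi_exp_neg_mul_mul_min_rpow_le {θ α : ℝ} (hθ0 : 0 ≤ θ) (hθ1 : θ < 1)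
    (hα : 1 ≤ α) :
    ∫⁻ t in Ioi (0:ℝ), ENNReal.ofReal (Real.exp (-(α * t)) * min t 1 ^ (-θ))
      ≤ ENNReal.ofReal ((Real.Gamma (1 - θ) + 1) * α ^ (θ - 1)) := by
  have hα0 : 0 < α := by linarith
  have hmin : ∀ t : ℝ, 0 < t → min t 1 ^ (-θ) ≤ t ^ (-θ) + t ^ (0:ℝ) := fun t ht => by
    rcases le_or_gt t 1 with h1 | h1
    · rw [min_eq_left h1, Real.rpow_zero]; linarith
    · rw [min_eq_right h1.le, Real.one_rpow, Real.rpow_zero]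
      linarith [Real.rpow_nonneg ht.le (-θ)]
  calc ∫⁻ t in Ioi (0:ℝ), ENNReal.ofReal (Real.exp (-(α * t)) * min t 1 ^ (-θ))
      ≤ ∫⁻ t in Ioi (0:ℝ), (ENNReal.ofReal (Real.exp (-(α * t)) * t ^ (-θ))
          + ENNReal.ofReal (Real.exp (-(α * t)) * t ^ (0:ℝ))) := by
        refine setLIntegral_mono' measurableSet_Ioi fun t (ht : 0 < t) => ?_
        rw [← ENNReal.ofReal_add (by positivity) (by positivity), ← mul_add]
        exact ENNReal.ofReal_le_ofReal (by gcongr; exact hmin t ht)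
    _ = ENNReal.ofReal (Real.Gamma (-θ + 1) * α ^ (-(-θ + 1)))
          + ENNReal.ofReal (Real.Gamma ((0:ℝ) + 1) * α ^ (-((0:ℝ) + 1))) := by
        rw [lintegral_add_left (by fun_prop),
          lintegral_Ioi_exp_neg_mul_mul_rpow (by linarith) hα0,
          lintegral_Ioi_exp_neg_mul_mul_rpow (by norm_num) hα0]
    _ ≤ ENNReal.ofReal ((Real.Gamma (1 - θ) + 1) * α ^ (θ - 1)) := by
        have hΓ : 0 < Real.Gamma (1 - θ) := Real.Gamma_pos_of_pos (by linarith)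
        have hα1 : α ^ (-1 : ℝ) ≤ α ^ (θ - 1) := Real.rpow_le_rpow_of_exponent_le hα (by linarith)
        rw [← ENNReal.ofReal_add (by rw [neg_add_eq_sub]; positivity) (by positivity)]
        refine ENNReal.ofReal_le_ofReal ?_
        rw [zero_add, Real.Gamma_one, neg_add_eq_sub, neg_sub]
        linarith

theorem heatKernel_le_rpow_of_subGaussian {E : Type*} [PseudoMetricSpace E]
    {P : ℝ → E → E → ℝ≥0∞} {c₃ c₄ d_f d_w : ℝ} (hc₃ : 0 ≤ c₃) (hc₄ : 0 ≤ c₄)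
    (hker : ∀ x y : E, ∀ t : ℝ, 0 < t → t ≤ 1 →
      P t x y ≤ ENNReal.ofReal (c₃ * t ^ (-(d_f / d_w)) *
        Real.exp (-c₄ * (dist x y ^ d_w / t) ^ (1 / (d_w - 1)))))
    (x y : E) (t : ℝ) (ht : 0 < t) (ht1 : t ≤ 1) :
    P t x y ≤ ENNReal.ofReal (c₃ * t ^ (-(d_f / d_w))) := by
  refine (hker x y t ht ht1).trans (ENNReal.ofReal_le_ofReal ?_)
  refine mul_le_of_le_one_right (by positivity) (Real.exp_le_one_iff.2 ?_)
  exact mul_nonpos_of_nonpos_of_nonneg (neg_nonpos.2 hc₄) (by positivity)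

section HeatKernel

variable {E : Type*} [MeasurableSpace E] {m : Measure E} {P : ℝ → E → E → ℝ≥0∞}

theorem heatKernel_le_of_forall_le_of_le
    (hsymm : ∀ t > (0:ℝ), ∀ x y : E, P t x y = P t y x)
    (hck : ∀ s > (0:ℝ), ∀ t > (0:ℝ), ∀ x y : E, P (t + s) x y = ∫⁻ z, P t x z * P s z y ∂m)
    (hsub : ∀ t > (0:ℝ), ∀ x : E, ∫⁻ y, P t x y ∂m ≤ 1)
    {s t : ℝ} (hs : 0 < s) (hst : s ≤ t) {M : ℝ≥0∞} (hM : ∀ x y, P s x y ≤ M) (x y : E) :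
    P t x y ≤ M := by
  rcases hst.eq_or_lt with rfl | hst
  · exact hM x y
  rcases eq_or_ne M ⊤ with rfl | hMtop
  · exact le_top
  have hts : 0 < t - s := by linarith
  calc P t x y = ∫⁻ z, P s x z * P (t - s) z y ∂m := by
        rw [← hck (t - s) hts s hs, add_sub_cancel]
    _ ≤ ∫⁻ z, M * P (t - s) y z ∂m :=
        lintegral_mono fun z => by rw [hsymm _ hts]; exact mul_le_mul_left (hM x z) _
    _ ≤ M := by
        rw [lintegral_const_mul' _ _ hMtop]
        exact mul_le_of_le_one_right' (hsub _ hts y)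

theorem heatKernel_le_min_rpow
    (hsymm : ∀ t > (0:ℝ), ∀ x y : E, P t x y = P t y x)
    (hck : ∀ s > (0:ℝ), ∀ t > (0:ℝ), ∀ x y : E, P (t + s) x y = ∫⁻ z, P t x z * P s z y ∂m)
    (hsub : ∀ t > (0:ℝ), ∀ x : E, ∫⁻ y, P t x y ∂m ≤ 1) {c a : ℝ}
    (hdiag : ∀ x y : E, ∀ t : ℝ, 0 < t → t ≤ 1 → P t x y ≤ ENNReal.ofReal (c * t ^ (-a)))
    (x y : E) (t : ℝ) (ht : 0 < t) :
    P t x y ≤ ENNReal.ofReal (c * min t 1 ^ (-a)) := by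
  rcases le_or_gt t 1 with ht1 | ht1
  · rw [min_eq_left ht1]
    exact hdiag x y t ht ht1
  · rw [min_eq_right ht1.le, Real.one_rpow, mul_one]
    refine heatKernel_le_of_forall_le_of_le hsymm hck hsub one_pos ht1.le (fun x y => ?_) x y
    simpa using hdiag x y 1 one_pos le_rfl

theorem lintegral_rpow_heatKernel_le (hsub : ∀ t > (0:ℝ), ∀ x : E, ∫⁻ y, P t x y ∂m ≤ 1)
    {c a : ℝ} (hc : 0 ≤ c)
    (hbound : ∀ x y : E, ∀ t : ℝ, 0 < t → P t x y ≤ ENNReal.ofReal (c * min t 1 ^ (-a)))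
    {p : ℝ} (hp : 1 ≤ p) {t : ℝ} (ht : 0 < t) (x : E) :
    ∫⁻ y, P t x y ^ p ∂m
      ≤ ENNReal.ofReal (c ^ ((p - 1) / p) * min t 1 ^ (-((p - 1) / p * a))) ^ p := by
  have hp0 : 0 < p := by linarith
  have hmin : 0 < min t 1 := lt_min ht one_pos
  calc ∫⁻ y, P t x y ^ p ∂m
      ≤ ENNReal.ofReal (c * min t 1 ^ (-a)) ^ (p - 1) * ∫⁻ y, P t x y ∂m :=
        lintegral_rpow_le_of_le ENNReal.ofReal_ne_top (fun y => hbound x y t ht) hp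
    _ ≤ ENNReal.ofReal (c * min t 1 ^ (-a)) ^ (p - 1) := mul_le_of_le_one_right' (hsub t ht x)
    _ = ENNReal.ofReal (c ^ ((p - 1) / p) * min t 1 ^ (-((p - 1) / p * a))) ^ p := by
        rw [ENNReal.ofReal_rpow_of_nonneg (by positivity) (by linarith),
          ENNReal.ofReal_rpow_of_nonneg (by positivity) hp0.le,
          Real.mul_rpow hc (by positivity), Real.mul_rpow (by positivity) (by positivity),
          ← Real.rpow_mul hc, ← Real.rpow_mul hmin.le, ← Real.rpow_mul hmin.le]
        congr 3 <;> field_simp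

theorem lintegral_heatResolvent_rpow_le [SFinite m]
    (hmeas : Measurable (fun q : ℝ × E × E => P q.1 q.2.1 q.2.2))
    (hsub : ∀ t > (0:ℝ), ∀ x : E, ∫⁻ y, P t x y ∂m ≤ 1)
    {c a : ℝ} (hc : 0 < c)
    (hbound : ∀ x y : E, ∀ t : ℝ, 0 < t → P t x y ≤ ENNReal.ofReal (c * min t 1 ^ (-a)))
    {p : ℝ} (hp : 1 ≤ p) (ha : 0 ≤ a) (hpa : (p - 1) / p * a < 1) {α : ℝ} (hα : 1 ≤ α) (x : E) :
    (∫⁻ y, heatResolvent P α x y ^ p ∂m) ^ (1 / p)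
      ≤ ENNReal.ofReal (c ^ ((p - 1) / p) * (Real.Gamma (1 - (p - 1) / p * a) + 1)
          * α ^ ((p - 1) / p * a - 1)) := by
  set θ := (p - 1) / p * a
  have hp0 : 0 < p := by linarith
  have hθ0 : 0 ≤ θ := mul_nonneg (div_nonneg (by linarith) hp0.le) ha
  set K : ℝ → ℝ := fun t => c ^ ((p - 1) / p) * min t 1 ^ (-θ)
  have hK : ∀ t, 0 < t → 0 < K t := fun t ht => by have := lt_min ht one_pos; positivity
  have hF : Measurable
      (Function.uncurry fun t y => ENNReal.ofReal (Real.exp (-(α * t))) * P t x y) :=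
    (by fun_prop : Measurable fun q : ℝ × E => ENNReal.ofReal (Real.exp (-(α * q.1)))).mul
      (hmeas.comp (measurable_fst.prodMk (measurable_const.prodMk measurable_snd)))
  have hMinkowski := lintegral_rpow_lintegral_le (ν := volume.restrict (Ioi 0)) (m := m) hF
    (h := fun t => ENNReal.ofReal (Real.exp (-(α * t))) * ENNReal.ofReal (K t)) (by fun_prop)
    ((ae_restrict_iff' measurableSet_Ioi).2 <| .of_forall fun t (ht : 0 < t) =>
      mul_ne_zero (by simpa using Real.exp_pos _) (by simpa using hK t ht))
    (.of_forall fun t => by finiteness) hp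
    ((ae_restrict_iff' measurableSet_Ioi).2 <| .of_forall fun t (ht : 0 < t) => by
      simp only [ENNReal.mul_rpow_of_nonneg _ _ hp0.le]
      rw [lintegral_const_mul' _ _ (by finiteness)]
      exact mul_le_mul_right (lintegral_rpow_heatKernel_le hsub hc.le hbound hp ht x) _)
  calc (∫⁻ y, heatResolvent P α x y ^ p ∂m) ^ (1 / p)
      ≤ ((∫⁻ t in Ioi 0, ENNReal.ofReal (Real.exp (-(α * t))) * ENNReal.ofReal (K t)) ^ p)
          ^ (1 / p) := ENNReal.rpow_le_rpow hMinkowski (by positivity)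
    _ = ENNReal.ofReal (c ^ ((p - 1) / p))
          * ∫⁻ t in Ioi 0, ENNReal.ofReal (Real.exp (-(α * t)) * min t 1 ^ (-θ)) := by
        rw [← ENNReal.rpow_mul, mul_one_div_cancel hp0.ne', ENNReal.rpow_one,
          ← lintegral_const_mul' _ _ ENNReal.ofReal_ne_top]
        refine lintegral_congr fun t => ?_
        rw [← ENNReal.ofReal_mul (Real.exp_pos _).le, ← ENNReal.ofReal_mul (by positivity)]
        congr 1
        ring
    _ ≤ ENNReal.ofReal (c ^ ((p - 1) / p))
          * ENNReal.ofReal ((Real.Gamma (1 - θ) + 1) * α ^ (θ - 1)) := by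
        gcongr
        exact lintegral_Ioi_exp_neg_mul_mul_min_rpow_le hθ0 hpa hα
    _ = _ := by rw [← ENNReal.ofReal_mul (by positivity), mul_assoc]

end HeatKernel

theorem stmt_10_general {E : Type*} [MetricSpace E] [MeasurableSpace E]
    (m : Measure E) [IsFiniteMeasure m]
    (d_f : ℝ) (hdf : 1 ≤ d_f)
    (P : ℝ → E → E → ℝ≥0∞)
    (hmeas : Measurable (fun q : ℝ × E × E => P q.1 q.2.1 q.2.2))
    (hsymm : ∀ t > (0:ℝ), ∀ x y : E, P t x y = P t y x)
    (hck : ∀ s > (0:ℝ), ∀ t > (0:ℝ), ∀ x y : E,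
      P (t + s) x y = ∫⁻ z, P t x z * P s z y ∂m)
    (hsub : ∀ t > (0:ℝ), ∀ x : E, ∫⁻ y, P t x y ∂m ≤ 1)
    (c₃ c₄ d_w : ℝ) (hc₃ : 0 < c₃) (hc₄ : 0 < c₄) (hdw : 2 ≤ d_w)
    (hker : ∀ x y : E, ∀ t : ℝ, 0 < t → t ≤ 1 →
      P t x y ≤ ENNReal.ofReal (c₃ * t ^ (-(d_f / d_w)) *
        Real.exp (-c₄ * (dist x y ^ d_w / t) ^ (1 / (d_w - 1)))))
    (p δ : ℝ) (hp : 1 ≤ p) (hδ0 : 0 < δ)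
    (hcond : p * d_w * δ < d_f - p * (d_f - d_w)) :
    ∃ C > (0:ℝ), ∃ α₀ > (0:ℝ), ∀ α ≥ α₀,
      (⨆ x : E, (∫⁻ y, heatResolvent P α x y ^ p ∂m) ^ (1/p))
        ≤ ENNReal.ofReal (C * α ^ (-δ)) := by
  have hp0 : 0 < p := by linarith
  have hdw0 : 0 < d_w := by linarith
  have hθδ : (p - 1) / p * (d_f / d_w) ≤ 1 - δ := by
    rw [div_mul_div_comm, div_le_iff₀ (by positivity)]
    linarith
  set θ := (p - 1) / p * (d_f / d_w)
  have hbound := heatKernel_le_min_rpow hsymm hck hsub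
    (heatKernel_le_rpow_of_subGaussian hc₃.le hc₄.le hker)
  have hΓ : 0 < Real.Gamma (1 - θ) := Real.Gamma_pos_of_pos (by linarith)
  refine ⟨c₃ ^ ((p - 1) / p) * (Real.Gamma (1 - θ) + 1), by positivity, 1, one_pos,
    fun α hα => iSup_le fun x => ?_⟩
  calc _ ≤ _ := lintegral_heatResolvent_rpow_le hmeas hsub hc₃ hbound hp (by positivity)
        (by linarith) hα x
    _ ≤ _ := ENNReal.ofReal_le_ofReal <| by gcongr; linarith

theorem stmt_10 {E : Type*} [MetricSpace E] [MeasurableSpace E] [BorelSpace E]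
    (m : Measure E) [IsFiniteMeasure m]
    (hdiam : Metric.diam (Set.univ : Set E) ≤ 1)
    (c₁ c₂ d_f : ℝ) (hc₁ : 0 < c₁) (hc₂ : 0 < c₂) (hdf : 1 ≤ d_f)
    (hvol : ∀ x : E, ∀ r : ℝ, 0 < r → r ≤ 1 →
      ENNReal.ofReal (c₁ * r ^ d_f) ≤ m (Metric.ball x r) ∧
      m (Metric.ball x r) ≤ ENNReal.ofReal (c₂ * r ^ d_f))
    (P : ℝ → E → E → ℝ≥0∞)
    (hmeas : Measurable (fun q : ℝ × E × E => P q.1 q.2.1 q.2.2))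
    (hsymm : ∀ t > (0:ℝ), ∀ x y : E, P t x y = P t y x)
    (hck : ∀ s > (0:ℝ), ∀ t > (0:ℝ), ∀ x y : E,
      P (t + s) x y = ∫⁻ z, P t x z * P s z y ∂m)
    (hsub : ∀ t > (0:ℝ), ∀ x : E, ∫⁻ y, P t x y ∂m ≤ 1)
    (c₃ c₄ d_w : ℝ) (hc₃ : 0 < c₃) (hc₄ : 0 < c₄) (hdw : 2 ≤ d_w)
    (hker : ∀ x y : E, ∀ t : ℝ, 0 < t → t ≤ 1 →
      P t x y ≤ ENNReal.ofReal (c₃ * t ^ (-(d_f / d_w)) *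
        Real.exp (-c₄ * (dist x y ^ d_w / t) ^ (1 / (d_w - 1)))))
    (p δ : ℝ) (hp : 1 ≤ p) (hδ0 : 0 < δ) (hδ1 : δ ≤ 1)
    (hcond : p * d_w * δ < d_f - p * (d_f - d_w)) :
    ∃ C > (0:ℝ), ∃ α₀ > (0:ℝ), ∀ α ≥ α₀,
      (⨆ x : E, (∫⁻ y, heatResolvent P α x y ^ p ∂m) ^ (1/p))
        ≤ ENNReal.ofReal (C * α ^ (-δ)) :=
  stmt_10_general m d_f hdf P hmeas hsymm hck hsub c₃ c₄ d_w hc₃ hc₄ hdw hker p δ hp hδ0 hcond
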